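/- arXiv:2508.01787 — 5 statements merged into one kernel-verified Lean document; each statement's English description precedes it below -/
import Mathlib

section
/- Let 𝒜 be a complex unital Banach algebra with submultiplicative norm and ‖1‖ = 1. Let M ≥ 1 and let a₁, …, a_M ∈ 𝒜 be pairwise commuting elements with ‖a_k‖ ≤ r for all k, where r ≥ 0. Then ‖∏_{k=1}^{M} (1 + a_k) − exp(a₁ + ⋯ + a_M)‖ ≤ M r² e^{M r}. -/
/-!
Because the `a k` commute, `exp (∑ k, a k)` is the ordered product of the `exp (a k)`, so the
claim compares two ordered products of `M` factors. Every factor has norm at most `e^r`, and the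
tail bound `‖exp a - 1 - a‖ ≤ ‖a‖² e^‖a‖` makes corresponding factors `r² e^r`-close; telescoping
then gives `M · r² e^r · (e^r)^(M-1) = M r² e^(M r)`.
-/

open Finset
open scoped Nat

section Telescoping

variable {R : Type*} [SeminormedRing R] [NormOneClass R]

theorem norm_prod_ofFn_le_pow {n : ℕ} {B : ℝ} (x : Fin n → R) (hx : ∀ k, ‖x k‖ ≤ B) :
    ‖(List.ofFn x).prod‖ ≤ B ^ n := by
  induction n with
  | zero => simp
  | succ n ih =>
    rw [List.ofFn_succ, List.prod_cons, pow_succ']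
    have hB : 0 ≤ B := (norm_nonneg _).trans (hx 0)
    exact (norm_mul_le _ _).trans <|
      mul_le_mul (hx 0) (ih _ fun k => hx k.succ) (norm_nonneg _) hB

theorem norm_prod_ofFn_sub_prod_ofFn_le {n : ℕ} {B ε : ℝ} (x y : Fin n → R)
    (hx : ∀ k, ‖x k‖ ≤ B) (hy : ∀ k, ‖y k‖ ≤ B) (hxy : ∀ k, ‖x k - y k‖ ≤ ε) :
    ‖(List.ofFn x).prod - (List.ofFn y).prod‖ ≤ n * ε * B ^ (n - 1) := by
  induction n with
  | zero => simp
  | succ n ih =>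
    rw [List.ofFn_succ, List.ofFn_succ, List.prod_cons, List.prod_cons]
    set P := (List.ofFn fun k => x k.succ).prod
    set Q := (List.ofFn fun k => y k.succ).prod
    have hB : 0 ≤ B := (norm_nonneg _).trans (hx 0)
    have hP : ‖P‖ ≤ B ^ n := norm_prod_ofFn_le_pow _ fun k => hx k.succ
    have hPQ : ‖P - Q‖ ≤ n * ε * B ^ (n - 1) :=
      ih _ _ (fun k => hx k.succ) (fun k => hy k.succ) fun k => hxy k.succ
    calc ‖x 0 * P - y 0 * Q‖ = ‖(x 0 - y 0) * P + y 0 * (P - Q)‖ := by noncomm_ring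
      _ ≤ ‖x 0 - y 0‖ * ‖P‖ + ‖y 0‖ * ‖P - Q‖ :=
        (norm_add_le _ _).trans (add_le_add (norm_mul_le _ _) (norm_mul_le _ _))
      _ ≤ ε * B ^ n + B * (n * ε * B ^ (n - 1)) := by
        gcongr
        exacts [(norm_nonneg _).trans (hxy 0), hxy 0, hy 0]
      _ = (n + 1 : ℕ) * ε * B ^ n := by
        rcases n with _ | n
        · simp
        · push_cast; ring

end Telescoping

namespace NormedSpace

variable {𝔸 : Type*} [NormedRing 𝔸] [NormedAlgebra ℚ 𝔸] [CompleteSpace 𝔸]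

theorem norm_exp_sub_sum_le_norm_pow_mul_exp [NormOneClass 𝔸] (x : 𝔸) (n : ℕ) :
    ‖exp x - ∑ m ∈ range n, (m !⁻¹ : ℚ) • x ^ m‖ ≤ ‖x‖ ^ n * Real.exp ‖x‖ := by
  have htail : HasSum (fun m => ((m + n)!⁻¹ : ℚ) • x ^ (m + n))
      (exp x - ∑ m ∈ range n, (m !⁻¹ : ℚ) • x ^ m) :=
    (hasSum_nat_add_iff' n).mpr (exp_series_hasSum_exp' x)
  have hreal : HasSum (fun m => ‖x‖ ^ n * (‖x‖ ^ m / m !)) (‖x‖ ^ n * Real.exp ‖x‖) := by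
    rw [Real.exp_eq_exp_ℝ]
    exact (expSeries_div_hasSum_exp ‖x‖).mul_left _
  refine htail.norm_le_of_bounded hreal fun m => ?_
  have hfact : (m ! : ℝ) ≤ (m + n)! := by exact_mod_cast Nat.factorial_le (Nat.le_add_right m n)
  calc ‖((m + n)!⁻¹ : ℚ) • x ^ (m + n)‖
      = ((m + n)! : ℝ)⁻¹ * ‖x ^ (m + n)‖ := by simp [norm_smul, ← Rat.norm_cast_real]
    _ ≤ (m ! : ℝ)⁻¹ * ‖x‖ ^ (m + n) := by
      gcongr
      exact norm_pow_le x _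
    _ = ‖x‖ ^ n * (‖x‖ ^ m / m !) := by ring

theorem norm_exp_le_exp_norm [NormOneClass 𝔸] (x : 𝔸) : ‖exp x‖ ≤ Real.exp ‖x‖ := by
  simpa using norm_exp_sub_sum_le_norm_pow_mul_exp x 0

theorem norm_exp_sub_one_sub_le [NormOneClass 𝔸] (x : 𝔸) :
    ‖exp x - 1 - x‖ ≤ ‖x‖ ^ 2 * Real.exp ‖x‖ := by
  simpa [sum_range_succ, sub_sub] using norm_exp_sub_sum_le_norm_pow_mul_exp x 2

theorem exp_sum_eq_prod_ofFn_of_commute {n : ℕ} (a : Fin n → 𝔸)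
    (h : ∀ i j, Commute (a i) (a j)) :
    exp (∑ k, a k) = (List.ofFn fun k => exp (a k)).prod := by
  induction n with
  | zero => simp
  | succ n ih =>
    rw [Fin.sum_univ_succ, List.ofFn_succ, List.prod_cons,
      exp_add_of_commute (Commute.sum_right _ _ _ fun k _ => h 0 k.succ),
      ih _ fun i j => h i.succ j.succ]

end NormedSpace

theorem prod_one_add_sub_exp_sum_norm_le_general
    {𝒜 : Type*} [NormedRing 𝒜] [NormedAlgebra ℂ 𝒜] [CompleteSpace 𝒜] [NormOneClass 𝒜]
    (M : ℕ) (r : ℝ) (a : Fin M → 𝒜)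
    (hcomm : ∀ i j, Commute (a i) (a j)) (ha : ∀ k, ‖a k‖ ≤ r) :
    ‖(List.ofFn fun k : Fin M => 1 + a k).prod - NormedSpace.exp (∑ k, a k)‖
      ≤ M * r ^ 2 * Real.exp (M * r) := by
  let : NormedAlgebra ℚ 𝒜 := NormedAlgebra.restrictScalars ℚ ℂ 𝒜
  have h_one_add : ∀ k, ‖1 + a k‖ ≤ Real.exp r := fun k =>
    (norm_add_le _ _).trans (by rw [norm_one]; linarith [ha k, Real.add_one_le_exp r])
  have h_exp : ∀ k, ‖NormedSpace.exp (a k)‖ ≤ Real.exp r := fun k =>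
    (NormedSpace.norm_exp_le_exp_norm _).trans (Real.exp_le_exp.mpr (ha k))
  have h_diff : ∀ k, ‖1 + a k - NormedSpace.exp (a k)‖ ≤ r ^ 2 * Real.exp r := fun k => by
    rw [← norm_neg, neg_sub, sub_add_eq_sub_sub]
    exact (NormedSpace.norm_exp_sub_one_sub_le _).trans (by gcongr <;> exact ha k)
  rw [NormedSpace.exp_sum_eq_prod_ofFn_of_commute a hcomm]
  calc _ ≤ M * (r ^ 2 * Real.exp r) * Real.exp r ^ (M - 1) :=
        norm_prod_ofFn_sub_prod_ofFn_le _ _ h_one_add h_exp h_diff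
    _ = M * r ^ 2 * Real.exp (M * r) := by
      rcases M with _ | M
      · simp
      · rw [Nat.add_sub_cancel, ← Real.exp_nat_mul, Nat.cast_succ, add_one_mul (M : ℝ) r,
          Real.exp_add]
        ring

/-- In a complex unital Banach algebra, for pairwise commuting elements `a₁, …, a_M` of norm
at most `r`, the ordered product `∏ (1 + a_k)` differs from `exp(a₁ + ⋯ + a_M)` by at most
`M r² e^{M r}` in norm. -/
theorem prod_one_add_sub_exp_sum_norm_le
    {𝒜 : Type*} [NormedRing 𝒜] [NormedAlgebra ℂ 𝒜] [CompleteSpace 𝒜] [NormOneClass 𝒜]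
    (M : ℕ) (hM : 1 ≤ M) (r : ℝ) (hr : 0 ≤ r) (a : Fin M → 𝒜)
    (hcomm : ∀ i j, Commute (a i) (a j)) (ha : ∀ k, ‖a k‖ ≤ r) :
    ‖(List.ofFn fun k : Fin M => 1 + a k).prod - NormedSpace.exp (∑ k, a k)‖
      ≤ M * r ^ 2 * Real.exp (M * r) :=
  prod_one_add_sub_exp_sum_norm_le_general M r a hcomm ha
end

section
/- Let X be a finite nonempty set, β > 0, T > 0, and let A, B, Q be pairwise commuting hermitian operators on ℂ^X with B positive definite. Set f = (I + exp(−βQ − 2TB))^{−1} and define, for t,t' ∈ [0,T]: C_{−+}(t,t') = exp(−itA) f exp(it'A) exp((−2T+t+t')B); C_{+−}(t,t') = −exp(−itA) f exp(−βQ) exp(it'A) exp(−(t+t')B); C_{++}(t,t') = 1_{t≥t'} exp(−itA) f exp(it'A) exp((t'−t)B) − 1_{t<t'} exp(−itA) f exp(−βQ) exp(it'A) exp((t'−t−2T)B); C_{−−}(t,t') = 1_{t≤t'} exp(−itA) f exp(it'A) exp((t−t')B) − 1_{t>t'} exp(−itA) f exp(−βQ) exp(it'A) exp((t−t'−2T)B).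 Let q̃ and b̃ denote the smallest eigenvalues of Q and B respectively. Then for all t, t' ∈ [0,T] the operator norms satisfy: ‖C_{+−}(t,t')‖ ≤ e^{−βq̃} e^{−(t+t')b̃}; ‖C_{−+}(t,t')‖ ≤ e^{(−2T+t+t')b̃}; ‖C_{++}(t,t')‖ ≤ e^{−βq̃} e^{(−2T+t'−t)b̃} if t < t' and ‖C_{++}(t,t')‖ ≤ e^{(t'−t)b̃} if t ≥ t'; ‖C_{−−}(t,t')‖ ≤ e^{−βq̃} e^{(−2T+t−t')b̃} if t' < t and ‖C_{−−}(t,t')‖ ≤ e^{(t−t')b̃} if t' ≥ t. -/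
open MeasureTheory
open scoped BigOperators Matrix ComplexOrder

noncomputable section

/-- Matrix exponential (exponential series in the algebra of matrices). -/
noncomputable def mexp {X : Type*} [Fintype X] [DecidableEq X] (M : Matrix X X ℂ) :
    Matrix X X ℂ :=
  NormedSpace.exp M

/-- Operator norm of a matrix acting on the Euclidean (ℓ²) space `ℂ^X`. -/
noncomputable def opNorm {X : Type*} [Fintype X] [DecidableEq X] (M : Matrix X X ℂ) : ℝ :=
  ‖Matrix.toEuclideanCLM (𝕜 := ℂ) M‖

/-- The Keldysh covariance `C_{ρσ}(t,t')` of a dissipative system in the commuting case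
`[A,B] = [B,Q] = 0`, with `f = (I + e^{−βQ − 2TB})⁻¹`. Here `true` encodes the branch `+`
and `false` encodes the branch `−`. -/
noncomputable def keldyshCovDiss {X : Type*} [Fintype X] [DecidableEq X]
    (β T : ℝ) (A B Q : Matrix X X ℂ) : Bool → Bool → ℝ → ℝ → Matrix X X ℂ :=
  fun ρ σ t t' =>
  let f : Matrix X X ℂ := (1 + mexp ((-β : ℂ) • Q + ((-(2 * T) : ℝ) : ℂ) • B))⁻¹
  let E : ℝ → Matrix X X ℂ := fun s => mexp ((Complex.I * (s : ℂ)) • A)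
  let G : ℝ → Matrix X X ℂ := fun s => mexp (((s : ℝ) : ℂ) • B)
  match ρ, σ with
  | false, true => E (-t) * f * E t' * G (-(2 * T) + t + t')
  | true, false => -(E (-t) * f * mexp ((-β : ℂ) • Q) * E t' * G (-(t + t')))
  | true, true =>
      (if t' ≤ t then (1 : ℂ) else 0) • (E (-t) * f * E t' * G (t' - t))
        - (if t < t' then (1 : ℂ) else 0) •
          (E (-t) * f * mexp ((-β : ℂ) • Q) * E t' * G (t' - t - 2 * T))
  | false, false =>
      (if t ≤ t' then (1 : ℂ) else 0) • (E (-t) * f * E t' * G (t - t'))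
        - (if t' < t then (1 : ℂ) else 0) •
          (E (-t) * f * mexp ((-β : ℂ) • Q) * E t' * G (t - t' - 2 * T))

/-!
Each block of the covariance is a product of the unitaries `exp (∓ i s A)`, the factor `f`,
possibly `exp (-β Q)`, and a damping factor `exp (s B)` with `s ≤ 0` (because `t, t' ∈ [0, T]`),
so its norm is at most the product of the norms of these factors. The continuous functional
calculus for self-adjoint elements of a C⋆-algebra bounds them: `‖f‖ ≤ 1` because
`0 < (1 + eˣ)⁻¹ ≤ 1`, and `‖exp (r • M)‖ ≤ exp c` as soon as `r λ ≤ c` on the spectrum of `M`.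
-/

open scoped Matrix.Norms.L2Operator

section CStarAlgebra

variable {𝒜 : Type*} [CStarAlgebra 𝒜] {a : 𝒜}

lemma IsSelfAdjoint.norm_exp_smul_le (ha : IsSelfAdjoint a) {r c : ℝ}
    (h : ∀ x ∈ spectrum ℝ a, r * x ≤ c) : ‖NormedSpace.exp (r • a)‖ ≤ Real.exp c := by
  rw [← CFC.real_exp_eq_normedSpace_exp ((IsSelfAdjoint.all r).smul ha),
    ← cfc_comp_const_mul r Real.exp a]
  refine norm_cfc_le (Real.exp_nonneg c) fun x hx => ?_
  rw [Real.norm_of_nonneg (Real.exp_nonneg _)]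
  exact Real.exp_le_exp.mpr (h x hx)

lemma IsSelfAdjoint.norm_ringInverse_one_add_exp_le (ha : IsSelfAdjoint a) :
    ‖Ring.inverse (1 + NormedSpace.exp a)‖ ≤ 1 := by
  have hcfc : 1 + NormedSpace.exp a = cfc (fun x => 1 + Real.exp x) a := by
    rw [cfc_const_add 1 Real.exp a, CFC.real_exp_eq_normedSpace_exp, map_one]
  rw [hcfc, ← cfc_inv (f := fun x => 1 + Real.exp x) (a := a) (fun x _ => by positivity)]
  refine norm_cfc_le zero_le_one fun x _ => ?_
  rw [Real.norm_of_nonneg (by positivity)]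
  exact inv_le_one_of_one_le₀ (by linarith [Real.exp_pos x])

lemma CStarRing.norm_le_one_of_mem_unitary {U : 𝒜} (hU : U ∈ unitary 𝒜) : ‖U‖ ≤ 1 := by
  rcases subsingleton_or_nontrivial 𝒜 with _ | _
  · simp [Subsingleton.elim U 0]
  · exact (CStarRing.norm_of_mem_unitary hU).le

lemma IsSelfAdjoint.norm_exp_I_mul_smul_le (ha : IsSelfAdjoint a) (s : ℝ) :
    ‖NormedSpace.exp ((Complex.I * s) • a)‖ ≤ 1 := by
  have hU : NormedSpace.exp (Complex.I • s • a) ∈ unitary 𝒜 :=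
    (selfAdjoint.expUnitary ⟨s • a, (IsSelfAdjoint.all s).smul ha⟩).2
  rw [← Complex.coe_smul, smul_smul] at hU
  exact CStarRing.norm_le_one_of_mem_unitary hU

end CStarAlgebra

section Matrix

variable {X : Type*} [Fintype X] [DecidableEq X]

lemma opNorm_eq_norm (M : Matrix X X ℂ) : opNorm M = ‖M‖ := rfl

namespace Matrix.IsHermitian

variable {M : Matrix X X ℂ}

lemma norm_mexp_ofReal_smul_le (hM : M.IsHermitian) {r c : ℝ}
    (h : ∀ i, r * hM.eigenvalues i ≤ c) : ‖mexp ((r : ℂ) • M)‖ ≤ Real.exp c := by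
  refine (Complex.coe_smul r M).symm ▸ hM.isSelfAdjoint.norm_exp_smul_le fun x hx => ?_
  obtain ⟨i, rfl⟩ := hM.spectrum_real_eq_range_eigenvalues ▸ hx
  exact h i

lemma norm_mexp_ofReal_smul_le_of_nonpos (hM : M.IsHermitian) {b s : ℝ}
    (hb : ∀ i, b ≤ hM.eigenvalues i) (hs : s ≤ 0) :
    ‖mexp ((s : ℂ) • M)‖ ≤ Real.exp (s * b) :=
  hM.norm_mexp_ofReal_smul_le fun i => mul_le_mul_of_nonpos_left (hb i) hs

lemma norm_inv_one_add_mexp_le (hM : M.IsHermitian) : ‖(1 + mexp M)⁻¹‖ ≤ 1 :=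
  (1 + mexp M).nonsing_inv_eq_ringInverse ▸ hM.isSelfAdjoint.norm_ringInverse_one_add_exp_le

lemma norm_mexp_I_mul_smul_le (hM : M.IsHermitian) (s : ℝ) :
    ‖mexp ((Complex.I * s) • M)‖ ≤ 1 :=
  hM.isSelfAdjoint.norm_exp_I_mul_smul_le s

end Matrix.IsHermitian

end Matrix

section KeldyshCovDiss

variable {X : Type*} [Fintype X] [DecidableEq X] {A B Q : Matrix X X ℂ}

lemma norm_inv_one_add_mexp_smul_add_smul_le (hQ : Q.IsHermitian) (hB : B.IsHermitian)
    (β T : ℝ) : ‖(1 + mexp ((-β : ℂ) • Q + ((-(2 * T) : ℝ) : ℂ) • B))⁻¹‖ ≤ 1 :=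
  Matrix.IsHermitian.norm_inv_one_add_mexp_le <|
    (hQ.smul (IsSelfAdjoint.neg (Complex.conj_ofReal β))).add (hB.smul (Complex.conj_ofReal _))

lemma norm_keldyshTerm_le (hA : A.IsHermitian) (hQ : Q.IsHermitian) (hB : B.IsHermitian)
    {bt s : ℝ} (hbt : ∀ i, bt ≤ hB.eigenvalues i) (hs : s ≤ 0) (β T t t' : ℝ) :
    ‖mexp ((Complex.I * ((-t : ℝ) : ℂ)) • A)
        * (1 + mexp ((-β : ℂ) • Q + ((-(2 * T) : ℝ) : ℂ) • B))⁻¹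
        * mexp ((Complex.I * (t' : ℂ)) • A) * mexp ((s : ℂ) • B)‖ ≤ Real.exp (s * bt) := by
  simpa only [one_mul] using norm_mul_le_of_le
    (norm_mul_le_of_le (norm_mul_le_of_le (hA.norm_mexp_I_mul_smul_le (-t))
      (norm_inv_one_add_mexp_smul_add_smul_le hQ hB β T)) (hA.norm_mexp_I_mul_smul_le t'))
    (hB.norm_mexp_ofReal_smul_le_of_nonpos hbt hs)

lemma norm_keldyshTerm_mexp_le (hA : A.IsHermitian) (hQ : Q.IsHermitian) (hB : B.IsHermitian)
    {qt bt s β : ℝ} (hqt : ∀ i, qt ≤ hQ.eigenvalues i) (hbt : ∀ i, bt ≤ hB.eigenvalues i)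
    (hs : s ≤ 0) (hβ : 0 ≤ β) (T t t' : ℝ) :
    ‖mexp ((Complex.I * ((-t : ℝ) : ℂ)) • A)
        * (1 + mexp ((-β : ℂ) • Q + ((-(2 * T) : ℝ) : ℂ) • B))⁻¹ * mexp ((-β : ℂ) • Q)
        * mexp ((Complex.I * (t' : ℂ)) • A) * mexp ((s : ℂ) • B)‖
      ≤ Real.exp (-(β * qt)) * Real.exp (s * bt) := by
  have hQβ : ‖mexp ((-β : ℂ) • Q)‖ ≤ Real.exp (-(β * qt)) := by
    simpa using hQ.norm_mexp_ofReal_smul_le (r := -β) fun i => by nlinarith [hqt i]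
  simpa only [one_mul, mul_one] using norm_mul_le_of_le (norm_mul_le_of_le
    (norm_mul_le_of_le (norm_mul_le_of_le (hA.norm_mexp_I_mul_smul_le (-t))
      (norm_inv_one_add_mexp_smul_add_smul_le hQ hB β T)) hQβ) (hA.norm_mexp_I_mul_smul_le t'))
    (hB.norm_mexp_ofReal_smul_le_of_nonpos hbt hs)

end KeldyshCovDiss

theorem opNorm_bounds_keldyshCovDiss_general
    {X : Type*} [Fintype X] [DecidableEq X]
    (β T : ℝ) (hβ : 0 < β)
    (A B Q : Matrix X X ℂ) (hA : A.IsHermitian) (hQ : Q.IsHermitian) (hB : B.PosDef) :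
    ∀ qt bt : ℝ, qt = ⨅ ℓ, hQ.eigenvalues ℓ → bt = ⨅ ℓ, hB.1.eigenvalues ℓ →
    ∀ t ∈ Set.Icc (0 : ℝ) T, ∀ t' ∈ Set.Icc (0 : ℝ) T,
      (opNorm (keldyshCovDiss β T A B Q true false t t')
          ≤ Real.exp (-(β * qt)) * Real.exp (-((t + t') * bt))) ∧
      (opNorm (keldyshCovDiss β T A B Q false true t t')
          ≤ Real.exp ((-(2 * T) + t + t') * bt)) ∧
      (t < t' → opNorm (keldyshCovDiss β T A B Q true true t t')
          ≤ Real.exp (-(β * qt)) * Real.exp ((-(2 * T) + t' - t) * bt)) ∧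
      (t' ≤ t → opNorm (keldyshCovDiss β T A B Q true true t t')
          ≤ Real.exp ((t' - t) * bt)) ∧
      (t' < t → opNorm (keldyshCovDiss β T A B Q false false t t')
          ≤ Real.exp (-(β * qt)) * Real.exp ((-(2 * T) + t - t') * bt)) ∧
      (t ≤ t' → opNorm (keldyshCovDiss β T A B Q false false t t')
          ≤ Real.exp ((t - t') * bt)) := by
  intro qt bt hqt hbt t ⟨ht₀, htT⟩ t' ⟨ht'₀, ht'T⟩
  have hQ_ge (i : X) : qt ≤ hQ.eigenvalues i := hqt ▸ ciInf_le (Set.finite_range _).bddBelow i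
  have hB_ge (i : X) : bt ≤ hB.1.eigenvalues i := hbt ▸ ciInf_le (Set.finite_range _).bddBelow i
  have term {s : ℝ} (hs : s ≤ 0) := norm_keldyshTerm_le hA hQ hB.1 hB_ge hs β T t t'
  have term_mexp {s : ℝ} (hs : s ≤ 0) :=
    norm_keldyshTerm_mexp_le hA hQ hB.1 hQ_ge hB_ge hs hβ.le T t t'
  refine ⟨?_, ?_, fun h => ?_, fun h => ?_, fun h => ?_, fun h => ?_⟩ <;>
    simp only [keldyshCovDiss, opNorm_eq_norm]
  · rw [norm_neg]
    exact (term_mexp (by linarith)).trans_eq (by rw [neg_mul])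
  · exact term (by linarith)
  · rw [if_neg h.not_ge, if_pos h, zero_smul, one_smul, zero_sub, norm_neg]
    exact (term_mexp (by linarith)).trans_eq (by ring_nf)
  · rw [if_pos h, if_neg h.not_gt, one_smul, zero_smul, sub_zero]
    exact term (by linarith)
  · rw [if_neg h.not_ge, if_pos h, zero_smul, one_smul, zero_sub, norm_neg]
    exact (term_mexp (by linarith)).trans_eq (by ring_nf)
  · rw [if_pos h, if_neg h.not_gt, one_smul, zero_smul, sub_zero]
    exact term (by linarith)

/-- Operator norm bounds for the blocks of the Keldysh covariance of a dissipative system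
(`[A,B] = [A,Q] = [B,Q] = 0`, `B > 0`), in terms of the smallest eigenvalues `q̃` of `Q`
and `b̃` of `B`. Here `true` encodes the branch `+`, `false` encodes `−`. -/
theorem opNorm_bounds_keldyshCovDiss
    {X : Type*} [Fintype X] [DecidableEq X] [Nonempty X]
    (β T : ℝ) (hβ : 0 < β) (hT : 0 < T)
    (A B Q : Matrix X X ℂ) (hA : A.IsHermitian) (hQ : Q.IsHermitian) (hB : B.PosDef)
    (hAB : Commute A B) (hAQ : Commute A Q) (hBQ : Commute B Q) :
    ∀ qt bt : ℝ, qt = ⨅ ℓ, hQ.eigenvalues ℓ → bt = ⨅ ℓ, hB.1.eigenvalues ℓ →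
    ∀ t ∈ Set.Icc (0 : ℝ) T, ∀ t' ∈ Set.Icc (0 : ℝ) T,
      (opNorm (keldyshCovDiss β T A B Q true false t t')
          ≤ Real.exp (-(β * qt)) * Real.exp (-((t + t') * bt))) ∧
      (opNorm (keldyshCovDiss β T A B Q false true t t')
          ≤ Real.exp ((-(2 * T) + t + t') * bt)) ∧
      (t < t' → opNorm (keldyshCovDiss β T A B Q true true t t')
          ≤ Real.exp (-(β * qt)) * Real.exp ((-(2 * T) + t' - t) * bt)) ∧
      (t' ≤ t → opNorm (keldyshCovDiss β T A B Q true true t t')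
          ≤ Real.exp ((t' - t) * bt)) ∧
      (t' < t → opNorm (keldyshCovDiss β T A B Q false false t t')
          ≤ Real.exp (-(β * qt)) * Real.exp ((-(2 * T) + t - t') * bt)) ∧
      (t ≤ t' → opNorm (keldyshCovDiss β T A B Q false false t t')
          ≤ Real.exp ((t - t') * bt)) :=
  opNorm_bounds_keldyshCovDiss_general β T hβ A B Q hA hQ hB
end
end

section
/- Let X be a finite nonempty set, β > 0, T > 0, and let A, B, Q be pairwise commuting hermitian operators on ℂ^X with B positive definite. Set f = (I + exp(−βQ − 2TB))^{−1} and define the Keldysh covariance blocks C_{ρσ}(t,t') for t,t' ∈ [0,T] by: C_{−+}(t,t') = exp(−itA) f exp(it'A) exp((−2T+t+t')B); C_{+−}(t,t') = −exp(−itA) f exp(−βQ) exp(it'A) exp(−(t+t')B); C_{++}(t,t') = 1_{t≥t'} exp(−itA) f exp(it'A) exp((t'−t)B) − 1_{t<t'} exp(−itA) f exp(−βQ) exp(it'A) exp((t'−t−2T)B); C_{−−}(t,t') = 1_{t≤t'} exp(−itA) f exp(it'A) exp((t−t')B) − 1_{t>t'} exp(−itA) f exp(−βQ) exp(it'A) exp((t−t'−2T)B).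 Let q̃ and b̃ be the smallest eigenvalues of Q and B. Then for all x, y ∈ X: (i) sup_{t∈[0,T]} ∫₀^T |(C_{+−}(t,t'))_{x,y}| dt' ≤ e^{−βq̃} (1/b̃)(1 − e^{−Tb̃}); (ii) sup_{t∈[0,T]} ∫₀^T |(C_{−+}(t,t'))_{x,y}| dt' ≤ (1/b̃)(1 − e^{−Tb̃}); (iii) sup_{t∈[0,T]} ∫₀^T |(C_{++}(t,t'))_{x,y}| dt' ≤ (1 + e^{−βq̃})(1/b̃)(1 − e^{−Tb̃}); (iv) sup_{t'∈[0,T]} ∫₀^T |(C_{++}(t,t'))_{x,y}| dt ≤ (1 + e^{−βq̃})(1/b̃)(1 − e^{−Tb̃}). -/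
open MeasureTheory
open scoped BigOperators Matrix ComplexOrder

noncomputable section

/-!
Each block of the covariance is, entrywise, bounded by the L2 operator norm of a product of
`exp(∓itA)`, `f`, possibly `exp(-βQ)`, and `exp(sB)` with `s ≤ 0`. Diagonalising each hermitian
factor gives `‖exp(itA)‖ ≤ 1`, `‖f‖ ≤ 1`, `‖exp(-βQ)‖ ≤ e^{-βq̃}` and `‖exp(sB)‖ ≤ e^{sb̃}`. What
remains are integrals of exponentials `e^{±b̃(s-a)}` over subintervals of `[0,T]` on which the
exponent stays nonpositive, each of which is at most `(1 - e^{-Tb̃})/b̃`.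
-/

open Set Real

theorem setIntegral_exp_mul_sub_le {b T u v a : ℝ} (hb : 0 < b) (huv : u ≤ v)
    (hvu : v - u ≤ T) (hva : v ≤ a) :
    ∫ s in Icc u v, exp (b * (s - a)) ≤ 1 / b * (1 - exp (-(T * b))) := by
  rw [integral_Icc_eq_integral_Ioc, ← intervalIntegral.integral_of_le huv]
  simp only [mul_sub b]
  rw [intervalIntegral.integral_comp_mul_sub (fun s => exp s) hb.ne', integral_exp, smul_eq_mul,
    one_div]
  refine mul_le_mul_of_nonneg_left ?_ (inv_pos.mpr hb).le
  have hpeak : exp (b * v - b * a) ≤ 1 := exp_le_one_iff.mpr (by nlinarith)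
  have hdecay : exp (-(T * b)) ≤ exp (-(b * (v - u))) := exp_le_exp.mpr (by nlinarith)
  have hsplit : exp (b * u - b * a) = exp (b * v - b * a) * exp (-(b * (v - u))) := by
    rw [← exp_add]
    congr 1
    ring
  calc exp (b * v - b * a) - exp (b * u - b * a)
      = exp (b * v - b * a) * (1 - exp (-(b * (v - u)))) := by rw [hsplit, mul_one_sub]
    _ ≤ 1 * (1 - exp (-(b * (v - u)))) :=
        mul_le_mul_of_nonneg_right hpeak (sub_nonneg.mpr (exp_le_one_iff.mpr (by nlinarith)))
    _ ≤ 1 - exp (-(T * b)) := by linarith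

theorem setIntegral_exp_neg_mul_sub_le {b T u v a : ℝ} (hb : 0 < b) (huv : u ≤ v)
    (hvu : v - u ≤ T) (hau : a ≤ u) :
    ∫ s in Icc u v, exp (-(b * (s - a))) ≤ 1 / b * (1 - exp (-(T * b))) := by
  have h := setIntegral_exp_mul_sub_le (T := T) hb (neg_le_neg huv) (by linarith)
    (neg_le_neg hau)
  rw [integral_Icc_eq_integral_Ioc, ← intervalIntegral.integral_of_le (neg_le_neg huv),
    ← intervalIntegral.integral_comp_neg] at h
  rw [integral_Icc_eq_integral_Ioc, ← intervalIntegral.integral_of_le huv]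
  convert h using 4 with s
  ring

theorem setIntegral_Icc_le_add_of_le_on_Ioo {F f g : ℝ → ℝ} {a b c : ℝ} (hab : a ≤ b)
    (hbc : b ≤ c) (hF : ∀ s, 0 ≤ F s) (hf : IntegrableOn f (Icc a b))
    (hg : IntegrableOn g (Icc b c)) (hFf : ∀ s ∈ Ioo a b, F s ≤ f s)
    (hFg : ∀ s ∈ Ioo b c, F s ≤ g s) :
    ∫ s in Icc a c, F s ≤ (∫ s in Icc a b, f s) + ∫ s in Icc b c, g s := by
  set G : ℝ → ℝ := fun s => if s ≤ b then f s else g s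
  have hGf : EqOn G f (Icc a b) := fun s hs => if_pos hs.2
  have hGg : EqOn G g (Ioc b c) := fun s hs => if_neg (not_le.mpr hs.1)
  have hunion : Icc a b ∪ Ioc b c = Icc a c := Icc_union_Ioc_eq_Icc hab hbc
  have hGf_int : IntegrableOn G (Icc a b) := hf.congr_fun hGf.symm measurableSet_Icc
  have hGg_int : IntegrableOn G (Ioc b c) :=
    (hg.mono_set Ioc_subset_Icc_self).congr_fun hGg.symm measurableSet_Ioc
  have hFG : ∀ᵐ s ∂volume.restrict (Icc a c), F s ≤ G s := by
    rw [← Measure.restrict_congr_set Ioo_ae_eq_Icc]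
    filter_upwards [ae_restrict_mem measurableSet_Ioo,
      ae_restrict_of_ae (Measure.ae_ne volume b)] with s hs hsb
    rcases hsb.lt_or_gt with hlt | hgt
    · exact (hFf s ⟨hs.1, hlt⟩).trans_eq (if_pos hlt.le).symm
    · exact (hFg s ⟨hgt, hs.2⟩).trans_eq (if_neg (not_le.mpr hgt)).symm
  calc ∫ s in Icc a c, F s ≤ ∫ s in Icc a c, G s :=
        integral_mono_of_nonneg (ae_of_all _ hF) (hunion ▸ hGf_int.union hGg_int) hFG
    _ = (∫ s in Icc a b, G s) + ∫ s in Ioc b c, G s := by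
        rw [← hunion, setIntegral_union ((Iic_disjoint_Ioc le_rfl).mono_left Icc_subset_Iic_self)
          measurableSet_Ioc hGf_int hGg_int]
    _ = (∫ s in Icc a b, f s) + ∫ s in Icc b c, g s := by
        rw [setIntegral_congr_fun measurableSet_Icc hGf,
          setIntegral_congr_fun measurableSet_Ioc hGg, integral_Icc_eq_integral_Ioc (x := b)]

theorem setIntegral_le_of_nonneg_of_le_on {F g : ℝ → ℝ} {S : Set ℝ} (hS : MeasurableSet S)
    (hF : ∀ s, 0 ≤ F s) (hg : IntegrableOn g S) (hFg : ∀ s ∈ S, F s ≤ g s) :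
    ∫ s in S, F s ≤ ∫ s in S, g s :=
  integral_mono_of_nonneg (ae_of_all _ hF) hg ((ae_restrict_iff' hS).mpr (ae_of_all _ hFg))

theorem Unitary.norm_conjStarAlgAut {S E : Type*} [NormedRing E] [StarRing E] [CStarRing E]
    [SMul S E] [IsScalarTower S E E] [SMulCommClass S E E] (U : unitary E) (a : E) :
    ‖conjStarAlgAut S E U a‖ = ‖a‖ := by
  rw [conjStarAlgAut_apply, ← coe_star, CStarRing.norm_mul_coe_unitary,
    CStarRing.norm_coe_unitary_mul]

namespace Matrix

variable {X : Type*} [Fintype X] [DecidableEq X]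

open scoped Matrix.Norms.L2Operator

theorem norm_apply_le_l2_opNorm {𝕜 : Type*} [RCLike 𝕜] (M : Matrix X X 𝕜) (x y : X) :
    ‖M x y‖ ≤ ‖M‖ := by
  have h := toEuclideanCLM (n := X) (𝕜 := 𝕜) M |>.le_opNorm (WithLp.toLp 2 (Pi.single y 1))
  rw [toEuclideanCLM_toLp] at h
  simpa [mulVec_single, l2_opNorm_toEuclideanCLM] using (PiLp.norm_apply_le _ x).trans h

theorem IsHermitian.mexp_smul {M : Matrix X X ℂ} (hM : M.IsHermitian) (c : ℂ) :
    mexp (c • M) = Unitary.conjStarAlgAut ℂ _ hM.eigenvectorUnitary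
      (diagonal fun ℓ => Complex.exp (c * hM.eigenvalues ℓ)) := by
  have hcM : c • M = Unitary.conjStarAlgAut ℂ _ hM.eigenvectorUnitary
      (diagonal fun ℓ => c * hM.eigenvalues ℓ) := by
    conv_lhs => rw [hM.spectral_theorem]
    rw [← map_smul, ← diagonal_smul]
    rfl
  have h := exp_units_conj (Unitary.toUnits hM.eigenvectorUnitary)
    (diagonal fun ℓ => c * hM.eigenvalues ℓ)
  simp only [Unitary.val_toUnits_apply, exp_diagonal] at h
  rw [show (↑(Unitary.toUnits hM.eigenvectorUnitary)⁻¹ : Matrix X X ℂ) =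
    star (hM.eigenvectorUnitary : Matrix X X ℂ) from rfl] at h
  rw [mexp, hcM, Unitary.conjStarAlgAut_apply, Unitary.conjStarAlgAut_apply, h]
  congr 3
  ext ℓ
  simp [Complex.exp_eq_exp_ℂ]

theorem IsHermitian.norm_mexp_smul_le {M : Matrix X X ℂ} (hM : M.IsHermitian) (c : ℂ) {r : ℝ}
    (h : ∀ ℓ, (c * hM.eigenvalues ℓ).re ≤ r) : ‖mexp (c • M)‖ ≤ Real.exp r := by
  rw [hM.mexp_smul, Unitary.norm_conjStarAlgAut, l2_opNorm_diagonal]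
  refine (pi_norm_le_iff_of_nonneg (Real.exp_pos r).le).mpr fun ℓ => ?_
  rw [Complex.norm_exp]
  exact Real.exp_le_exp.mpr (h ℓ)

theorem IsHermitian.norm_mexp_ofReal_smul_le_s9 {M : Matrix X X ℂ} (hM : M.IsHermitian) {s m : ℝ}
    (hs : s ≤ 0) (hm : ∀ ℓ, m ≤ hM.eigenvalues ℓ) : ‖mexp ((s : ℂ) • M)‖ ≤ Real.exp (s * m) :=
  hM.norm_mexp_smul_le _ fun ℓ => by
    rw [← Complex.ofReal_mul, Complex.ofReal_re]
    exact mul_le_mul_of_nonpos_left (hm ℓ) hs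

theorem IsHermitian.norm_mexp_I_mul_smul_le_one {M : Matrix X X ℂ} (hM : M.IsHermitian) (s : ℝ) :
    ‖mexp ((Complex.I * s) • M)‖ ≤ 1 := by
  simpa using hM.norm_mexp_smul_le (Complex.I * s) (r := 0) fun ℓ => by simp

theorem IsHermitian.norm_inv_one_add_mexp_le_one {H : Matrix X X ℂ} (hH : H.IsHermitian) :
    ‖(1 + mexp H)⁻¹‖ ≤ 1 := by
  set φ := Unitary.conjStarAlgAut ℂ (Matrix X X ℂ) hH.eigenvectorUnitary
  set w : X → ℂ := fun ℓ => 1 + Complex.exp (hH.eigenvalues ℓ)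
  have hw : ∀ ℓ, w ℓ = ((1 + Real.exp (hH.eigenvalues ℓ) : ℝ) : ℂ) := fun ℓ => by
    simp [w, Complex.ofReal_exp]
  have hw0 : ∀ ℓ, w ℓ ≠ 0 := fun ℓ => by
    rw [hw]; exact Complex.ofReal_ne_zero.mpr (by positivity)
  have hφ : 1 + mexp H = φ (diagonal w) := by
    have h := hH.mexp_smul 1
    simp only [one_smul, one_mul] at h
    rw [h, ← map_one φ, ← map_add, ← diagonal_one, diagonal_add]
  have hinv : (1 + mexp H)⁻¹ = φ (diagonal w⁻¹) := by
    refine inv_eq_left_inv ?_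
    rw [hφ, ← map_mul, diagonal_mul_diagonal, ← map_one φ, ← diagonal_one]
    congr 2
    ext ℓ
    exact inv_mul_cancel₀ (hw0 ℓ)
  rw [hinv, Unitary.norm_conjStarAlgAut, l2_opNorm_diagonal]
  refine (pi_norm_le_iff_of_nonneg zero_le_one).mpr fun ℓ => ?_
  rw [Pi.inv_apply, hw, norm_inv, Complex.norm_real, Real.norm_of_nonneg (by positivity)]
  exact inv_le_one_of_one_le₀ (by linarith [Real.exp_pos (hH.eigenvalues ℓ)])

end Matrix

theorem isHermitian_keldyshExponent {X : Type*} {β T : ℝ} {B Q : Matrix X X ℂ}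
    (hQ : Q.IsHermitian) (hB : B.IsHermitian) :
    ((-β : ℂ) • Q + ((-(2 * T) : ℝ) : ℂ) • B).IsHermitian :=
  (hQ.smul (by simp [IsSelfAdjoint, Complex.conj_ofReal])).add
    (hB.smul (Complex.conj_ofReal _))

section KeldyshEntries

open Matrix
open scoped Matrix.Norms.L2Operator

variable {X : Type*} [Fintype X] [DecidableEq X] {β T q b : ℝ} {A B Q : Matrix X X ℂ}

theorem norm_keldyshPropagator_apply_le (hA : A.IsHermitian) (hQ : Q.IsHermitian)
    (hB : B.IsHermitian) (hb : ∀ ℓ, b ≤ hB.eigenvalues ℓ) (u v : ℝ) {s : ℝ} (hs : s ≤ 0)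
    (x y : X) :
    ‖(mexp ((Complex.I * u) • A) * (1 + mexp ((-β : ℂ) • Q + ((-(2 * T) : ℝ) : ℂ) • B))⁻¹ *
      mexp ((Complex.I * v) • A) * mexp ((s : ℂ) • B)) x y‖ ≤ Real.exp (s * b) := by
  refine (norm_apply_le_l2_opNorm _ x y).trans ?_
  have hf := (isHermitian_keldyshExponent (β := β) (T := T) hQ hB).norm_inv_one_add_mexp_le_one
  simpa using norm_mul_le_of_le (norm_mul_le_of_le (norm_mul_le_of_le
    (hA.norm_mexp_I_mul_smul_le_one u) hf) (hA.norm_mexp_I_mul_smul_le_one v))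
    (hB.norm_mexp_ofReal_smul_le_s9 hs hb)

theorem norm_keldyshThermalPropagator_apply_le (hA : A.IsHermitian) (hQ : Q.IsHermitian)
    (hB : B.IsHermitian) (hβ : 0 ≤ β) (hq : ∀ ℓ, q ≤ hQ.eigenvalues ℓ)
    (hb : ∀ ℓ, b ≤ hB.eigenvalues ℓ) (u v : ℝ) {s : ℝ} (hs : s ≤ 0) (x y : X) :
    ‖(mexp ((Complex.I * u) • A) * (1 + mexp ((-β : ℂ) • Q + ((-(2 * T) : ℝ) : ℂ) • B))⁻¹ *
      mexp ((-β : ℂ) • Q) * mexp ((Complex.I * v) • A) * mexp ((s : ℂ) • B)) x y‖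
      ≤ Real.exp (-(β * q)) * Real.exp (s * b) := by
  have hQβ : ‖mexp ((-β : ℂ) • Q)‖ ≤ Real.exp (-(β * q)) := by
    simpa using hQ.norm_mexp_ofReal_smul_le_s9 (neg_nonpos.mpr hβ) hq
  refine (norm_apply_le_l2_opNorm _ x y).trans ?_
  have hf := (isHermitian_keldyshExponent (β := β) (T := T) hQ hB).norm_inv_one_add_mexp_le_one
  simpa using norm_mul_le_of_le (norm_mul_le_of_le (norm_mul_le_of_le (norm_mul_le_of_le
    (hA.norm_mexp_I_mul_smul_le_one u) hf) hQβ) (hA.norm_mexp_I_mul_smul_le_one v))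
    (hB.norm_mexp_ofReal_smul_le_s9 hs hb)

theorem norm_keldyshCovDiss_true_false_apply_le (hA : A.IsHermitian) (hQ : Q.IsHermitian)
    (hB : B.IsHermitian) (hβ : 0 ≤ β) (hq : ∀ ℓ, q ≤ hQ.eigenvalues ℓ)
    (hb : ∀ ℓ, b ≤ hB.eigenvalues ℓ) {t t' : ℝ} (htt' : 0 ≤ t + t') (x y : X) :
    ‖keldyshCovDiss β T A B Q true false t t' x y‖
      ≤ Real.exp (-(β * q)) * Real.exp (-(t + t') * b) := by
  simp only [keldyshCovDiss, Matrix.neg_apply, norm_neg]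
  exact norm_keldyshThermalPropagator_apply_le hA hQ hB hβ hq hb (-t) t'
    (s := -(t + t')) (by linarith) x y

theorem norm_keldyshCovDiss_false_true_apply_le (hA : A.IsHermitian) (hQ : Q.IsHermitian)
    (hB : B.IsHermitian) (hb : ∀ ℓ, b ≤ hB.eigenvalues ℓ) {t t' : ℝ} (htt' : t + t' ≤ 2 * T)
    (x y : X) :
    ‖keldyshCovDiss β T A B Q false true t t' x y‖ ≤ Real.exp ((-(2 * T) + t + t') * b) :=
  norm_keldyshPropagator_apply_le hA hQ hB hb (-t) t' (by linarith) x y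

theorem norm_keldyshCovDiss_true_true_apply_le_of_le (hA : A.IsHermitian) (hQ : Q.IsHermitian)
    (hB : B.IsHermitian) (hb : ∀ ℓ, b ≤ hB.eigenvalues ℓ) {t t' : ℝ} (ht't : t' ≤ t) (x y : X) :
    ‖keldyshCovDiss β T A B Q true true t t' x y‖ ≤ Real.exp ((t' - t) * b) := by
  simp only [keldyshCovDiss, if_pos ht't, if_neg (not_lt.mpr ht't), zero_smul, one_smul,
    sub_zero]
  exact norm_keldyshPropagator_apply_le hA hQ hB hb (-t) t' (sub_nonpos.mpr ht't) x y

theorem norm_keldyshCovDiss_true_true_apply_le_of_lt (hA : A.IsHermitian) (hQ : Q.IsHermitian)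
    (hB : B.IsHermitian) (hβ : 0 ≤ β) (hq : ∀ ℓ, q ≤ hQ.eigenvalues ℓ)
    (hb : ∀ ℓ, b ≤ hB.eigenvalues ℓ) {t t' : ℝ} (htt' : t < t') (ht'T : t' - t ≤ 2 * T)
    (x y : X) :
    ‖keldyshCovDiss β T A B Q true true t t' x y‖
      ≤ Real.exp (-(β * q)) * Real.exp ((t' - t - 2 * T) * b) := by
  simp only [keldyshCovDiss, if_neg (not_le.mpr htt'), if_pos htt', zero_smul, one_smul,
    zero_sub, Matrix.neg_apply, norm_neg]
  exact norm_keldyshThermalPropagator_apply_le hA hQ hB hβ hq hb (-t) t'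
    (s := t' - t - 2 * T) (by linarith) x y

end KeldyshEntries

section KeldyshIntegrals

variable {X : Type*} [Fintype X] [DecidableEq X] {β T q b : ℝ} {A B Q : Matrix X X ℂ}

theorem setIntegral_norm_keldyshCovDiss_true_false_le (hA : A.IsHermitian) (hQ : Q.IsHermitian)
    (hB : B.IsHermitian) (hβ : 0 ≤ β) (hq : ∀ ℓ, q ≤ hQ.eigenvalues ℓ)
    (hb : ∀ ℓ, b ≤ hB.eigenvalues ℓ) (hb0 : 0 < b) {t : ℝ} (ht0 : 0 ≤ t) (htT : t ≤ T)
    (x y : X) :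
    ∫ t' in Icc 0 T, ‖keldyshCovDiss β T A B Q true false t t' x y‖
      ≤ exp (-(β * q)) * (1 / b) * (1 - exp (-(T * b))) := by
  calc ∫ t' in Icc 0 T, ‖keldyshCovDiss β T A B Q true false t t' x y‖
      ≤ ∫ t' in Icc 0 T, exp (-(β * q)) * exp (-(b * (t' - -t))) :=
        setIntegral_le_of_nonneg_of_le_on measurableSet_Icc (fun _ => norm_nonneg _)
          (Continuous.integrableOn_Icc (by fun_prop)) fun t' ht' =>
          (norm_keldyshCovDiss_true_false_apply_le hA hQ hB hβ hq hb (by linarith [ht'.1])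
            x y).trans_eq (by congr 2; ring)
    _ = exp (-(β * q)) * ∫ t' in Icc 0 T, exp (-(b * (t' - -t))) := integral_const_mul _ _
    _ ≤ exp (-(β * q)) * (1 / b * (1 - exp (-(T * b)))) :=
        mul_le_mul_of_nonneg_left (setIntegral_exp_neg_mul_sub_le hb0 (ht0.trans htT)
          (by linarith) (by linarith)) (exp_pos _).le
    _ = exp (-(β * q)) * (1 / b) * (1 - exp (-(T * b))) := by ring

theorem setIntegral_norm_keldyshCovDiss_false_true_le (hA : A.IsHermitian) (hQ : Q.IsHermitian)
    (hB : B.IsHermitian) (hb : ∀ ℓ, b ≤ hB.eigenvalues ℓ) (hb0 : 0 < b) {t : ℝ}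
    (ht0 : 0 ≤ t) (htT : t ≤ T) (x y : X) :
    ∫ t' in Icc 0 T, ‖keldyshCovDiss β T A B Q false true t t' x y‖
      ≤ 1 / b * (1 - exp (-(T * b))) := by
  calc ∫ t' in Icc 0 T, ‖keldyshCovDiss β T A B Q false true t t' x y‖
      ≤ ∫ t' in Icc 0 T, exp (b * (t' - (2 * T - t))) :=
        setIntegral_le_of_nonneg_of_le_on measurableSet_Icc (fun _ => norm_nonneg _)
          (Continuous.integrableOn_Icc (by fun_prop)) fun t' ht' =>
          (norm_keldyshCovDiss_false_true_apply_le hA hQ hB hb (by linarith [ht'.2])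
            x y).trans_eq (by congr 1; ring)
    _ ≤ 1 / b * (1 - exp (-(T * b))) :=
        setIntegral_exp_mul_sub_le hb0 (ht0.trans htT) (by linarith) (by linarith)

theorem setIntegral_norm_keldyshCovDiss_true_true_le (hA : A.IsHermitian) (hQ : Q.IsHermitian)
    (hB : B.IsHermitian) (hβ : 0 ≤ β) (hq : ∀ ℓ, q ≤ hQ.eigenvalues ℓ)
    (hb : ∀ ℓ, b ≤ hB.eigenvalues ℓ) (hb0 : 0 < b) {t : ℝ} (ht0 : 0 ≤ t) (htT : t ≤ T)
    (x y : X) :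
    ∫ t' in Icc 0 T, ‖keldyshCovDiss β T A B Q true true t t' x y‖
      ≤ (1 + exp (-(β * q))) * (1 / b) * (1 - exp (-(T * b))) := by
  calc ∫ t' in Icc 0 T, ‖keldyshCovDiss β T A B Q true true t t' x y‖
      ≤ (∫ t' in Icc 0 t, exp (b * (t' - t))) +
          ∫ t' in Icc t T, exp (-(β * q)) * exp (b * (t' - (t + 2 * T))) :=
        setIntegral_Icc_le_add_of_le_on_Ioo ht0 htT (fun _ => norm_nonneg _)
          (Continuous.integrableOn_Icc (by fun_prop)) (Continuous.integrableOn_Icc (by fun_prop))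
          (fun t' ht' => (norm_keldyshCovDiss_true_true_apply_le_of_le hA hQ hB hb ht'.2.le
            x y).trans_eq (by rw [mul_comm]))
          (fun t' ht' => (norm_keldyshCovDiss_true_true_apply_le_of_lt hA hQ hB hβ hq hb ht'.1
            (by linarith [ht'.2]) x y).trans_eq (by congr 2; ring))
    _ = (∫ t' in Icc 0 t, exp (b * (t' - t))) +
          exp (-(β * q)) * ∫ t' in Icc t T, exp (b * (t' - (t + 2 * T))) := by
        rw [integral_const_mul]
    _ ≤ 1 / b * (1 - exp (-(T * b))) + exp (-(β * q)) * (1 / b * (1 - exp (-(T * b)))) := by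
        gcongr
        · exact setIntegral_exp_mul_sub_le hb0 ht0 (by linarith) le_rfl
        · exact setIntegral_exp_mul_sub_le hb0 htT (by linarith) (by linarith)
    _ = (1 + exp (-(β * q))) * (1 / b) * (1 - exp (-(T * b))) := by ring

theorem setIntegral_fst_norm_keldyshCovDiss_true_true_le (hA : A.IsHermitian) (hQ : Q.IsHermitian)
    (hB : B.IsHermitian) (hβ : 0 ≤ β) (hq : ∀ ℓ, q ≤ hQ.eigenvalues ℓ)
    (hb : ∀ ℓ, b ≤ hB.eigenvalues ℓ) (hb0 : 0 < b) {t' : ℝ} (ht'0 : 0 ≤ t') (ht'T : t' ≤ T)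
    (x y : X) :
    ∫ t in Icc 0 T, ‖keldyshCovDiss β T A B Q true true t t' x y‖
      ≤ (1 + exp (-(β * q))) * (1 / b) * (1 - exp (-(T * b))) := by
  calc ∫ t in Icc 0 T, ‖keldyshCovDiss β T A B Q true true t t' x y‖
      ≤ (∫ t in Icc 0 t', exp (-(β * q)) * exp (-(b * (t - (t' - 2 * T))))) +
          ∫ t in Icc t' T, exp (-(b * (t - t'))) :=
        setIntegral_Icc_le_add_of_le_on_Ioo ht'0 ht'T (fun _ => norm_nonneg _)
          (Continuous.integrableOn_Icc (by fun_prop)) (Continuous.integrableOn_Icc (by fun_prop))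
          (fun t ht => (norm_keldyshCovDiss_true_true_apply_le_of_lt hA hQ hB hβ hq hb ht.2
            (by linarith [ht.1]) x y).trans_eq (by congr 2; ring))
          (fun t ht => (norm_keldyshCovDiss_true_true_apply_le_of_le hA hQ hB hb ht.1.le
            x y).trans_eq (by congr 1; ring))
    _ = exp (-(β * q)) * (∫ t in Icc 0 t', exp (-(b * (t - (t' - 2 * T))))) +
          ∫ t in Icc t' T, exp (-(b * (t - t'))) := by
        rw [integral_const_mul]
    _ ≤ exp (-(β * q)) * (1 / b * (1 - exp (-(T * b)))) + 1 / b * (1 - exp (-(T * b))) := by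
        gcongr
        · exact setIntegral_exp_neg_mul_sub_le hb0 ht'0 (by linarith) (by linarith)
        · exact setIntegral_exp_neg_mul_sub_le hb0 ht'T (by linarith) le_rfl
    _ = (1 + exp (-(β * q))) * (1 / b) * (1 - exp (-(T * b))) := by ring

end KeldyshIntegrals

theorem integral_entry_bounds_keldyshCovDiss_general
    {X : Type*} [Fintype X] [DecidableEq X]
    (β T : ℝ) (hβ : 0 < β)
    (A B Q : Matrix X X ℂ) (hA : A.IsHermitian) (hQ : Q.IsHermitian) (hB : B.PosDef) :
    ∀ qt bt : ℝ, qt = ⨅ ℓ, hQ.eigenvalues ℓ → bt = ⨅ ℓ, hB.1.eigenvalues ℓ →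
    ∀ x y : X,
      (∀ t ∈ Set.Icc (0 : ℝ) T,
        (∫ t' in Set.Icc (0 : ℝ) T,
            ‖(keldyshCovDiss β T A B Q true false t t') x y‖)
          ≤ Real.exp (-(β * qt)) * (1 / bt) * (1 - Real.exp (-(T * bt)))) ∧
      (∀ t ∈ Set.Icc (0 : ℝ) T,
        (∫ t' in Set.Icc (0 : ℝ) T,
            ‖(keldyshCovDiss β T A B Q false true t t') x y‖)
          ≤ (1 / bt) * (1 - Real.exp (-(T * bt)))) ∧
      (∀ t ∈ Set.Icc (0 : ℝ) T,
        (∫ t' in Set.Icc (0 : ℝ) T,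
            ‖(keldyshCovDiss β T A B Q true true t t') x y‖)
          ≤ (1 + Real.exp (-(β * qt))) * (1 / bt) * (1 - Real.exp (-(T * bt)))) ∧
      (∀ t' ∈ Set.Icc (0 : ℝ) T,
        (∫ t in Set.Icc (0 : ℝ) T,
            ‖(keldyshCovDiss β T A B Q true true t t') x y‖)
          ≤ (1 + Real.exp (-(β * qt))) * (1 / bt) * (1 - Real.exp (-(T * bt)))) := by
  intro qt bt hqt hbt x y
  have : Nonempty X := ⟨x⟩
  have hq : ∀ ℓ, qt ≤ hQ.eigenvalues ℓ := fun ℓ => hqt ▸ ciInf_le (Finite.bddBelow_range _) ℓ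
  have hb : ∀ ℓ, bt ≤ hB.1.eigenvalues ℓ := fun ℓ => hbt ▸ ciInf_le (Finite.bddBelow_range _) ℓ
  have hb0 : 0 < bt := by
    obtain ⟨ℓ, hℓ⟩ := exists_eq_ciInf_of_finite (f := hB.1.eigenvalues)
    exact hbt ▸ hℓ ▸ hB.eigenvalues_pos ℓ
  exact ⟨fun t ht => setIntegral_norm_keldyshCovDiss_true_false_le hA hQ hB.1 hβ.le hq hb hb0
      ht.1 ht.2 x y,
    fun t ht => setIntegral_norm_keldyshCovDiss_false_true_le hA hQ hB.1 hb hb0 ht.1 ht.2 x y,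
    fun t ht => setIntegral_norm_keldyshCovDiss_true_true_le hA hQ hB.1 hβ.le hq hb hb0
      ht.1 ht.2 x y,
    fun t' ht' => setIntegral_fst_norm_keldyshCovDiss_true_true_le hA hQ hB.1 hβ.le hq hb hb0
      ht'.1 ht'.2 x y⟩

/-- Time-integral bounds on the matrix entries of the Keldysh covariance of a dissipative
system (`[A,B] = [A,Q] = [B,Q] = 0`, `B > 0`), in terms of the smallest eigenvalues `q̃` of
`Q` and `b̃` of `B`. Here `true` encodes the branch `+`, `false` encodes `−`.
The supremum over `t ∈ [0,T]` is expressed as a bound for every such `t`. -/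
theorem integral_entry_bounds_keldyshCovDiss
    {X : Type*} [Fintype X] [DecidableEq X] [Nonempty X]
    (β T : ℝ) (hβ : 0 < β) (hT : 0 < T)
    (A B Q : Matrix X X ℂ) (hA : A.IsHermitian) (hQ : Q.IsHermitian) (hB : B.PosDef)
    (hAB : Commute A B) (hAQ : Commute A Q) (hBQ : Commute B Q) :
    ∀ qt bt : ℝ, qt = ⨅ ℓ, hQ.eigenvalues ℓ → bt = ⨅ ℓ, hB.1.eigenvalues ℓ →
    ∀ x y : X,
      (∀ t ∈ Set.Icc (0 : ℝ) T,
        (∫ t' in Set.Icc (0 : ℝ) T,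
            ‖(keldyshCovDiss β T A B Q true false t t') x y‖)
          ≤ Real.exp (-(β * qt)) * (1 / bt) * (1 - Real.exp (-(T * bt)))) ∧
      (∀ t ∈ Set.Icc (0 : ℝ) T,
        (∫ t' in Set.Icc (0 : ℝ) T,
            ‖(keldyshCovDiss β T A B Q false true t t') x y‖)
          ≤ (1 / bt) * (1 - Real.exp (-(T * bt)))) ∧
      (∀ t ∈ Set.Icc (0 : ℝ) T,
        (∫ t' in Set.Icc (0 : ℝ) T,
            ‖(keldyshCovDiss β T A B Q true true t t') x y‖)
          ≤ (1 + Real.exp (-(β * qt))) * (1 / bt) * (1 - Real.exp (-(T * bt)))) ∧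
      (∀ t' ∈ Set.Icc (0 : ℝ) T,
        (∫ t in Set.Icc (0 : ℝ) T,
            ‖(keldyshCovDiss β T A B Q true true t t') x y‖)
          ≤ (1 + Real.exp (-(β * qt))) * (1 / bt) * (1 - Real.exp (-(T * bt)))) :=
  integral_entry_bounds_keldyshCovDiss_general β T hβ A B Q hA hQ hB
end
end

section
/- Let X be a finite nonempty set, β > 0, T > 0, and let A, B, Q be pairwise commuting hermitian operators on ℂ^X with B positive semidefinite. Set A₊ = A + iB, A₋ = A − iB, f₋ᵦ = (I + exp(−βQ) exp(iA₊T) exp(−iA₋T))^{−1}, fᵦ = f₋ᵦ exp(−βQ) exp(iA₊T) exp(−iA₋T), and f = (I + exp(−βQ − 2TB))^{−1}. Then: (i) exp(iA₊T) exp(−iA₋T) = exp(−2TB) and f₋ᵦ = f; (ii) for all t, t' ∈ [0,T], exp(iA₊(T−t)) exp(−iA₋T) f₋ᵦ exp(iA₋t') = exp(−itA) f exp(it'A) exp((−2T+t+t')B); (iii) for all t, t' ∈ [0,T], exp(−iA₋t) f₋ᵦ exp(−βQ) exp(iA₊t') = exp(−itA) f exp(−βQ) exp(it'A) exp(−(t+t')B);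 (iv) for all t, t' ∈ [0,T], exp(−iA₋t) f₋ᵦ exp(iA₋t') = exp(−itA) f exp(it'A) exp((t'−t)B) and exp(−iA₋t) fᵦ exp(iA₋t') = exp(−itA) f exp(−βQ) exp(it'A) exp((t'−t−2T)B). -/
open MeasureTheory
open scoped BigOperators Matrix ComplexOrder

noncomputable section

/-- The Fermi-type operator `f₋ᵦ = (I + e^{−βQ} e^{iA₊T} e^{−iA₋T})⁻¹`, with
`A₊ = A + iB` and `A₋ = A − iB`. -/
noncomputable def fermiMinus {X : Type*} [Fintype X] [DecidableEq X]
    (β T : ℝ) (A B Q : Matrix X X ℂ) : Matrix X X ℂ :=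
  (1 + mexp ((-β : ℂ) • Q) * mexp ((Complex.I * (T : ℂ)) • (A + Complex.I • B)) *
      mexp ((-Complex.I * (T : ℂ)) • (A - Complex.I • B)))⁻¹

/-- The Fermi-type operator `fᵦ = f₋ᵦ e^{−βQ} e^{iA₊T} e^{−iA₋T}`. -/
noncomputable def fermiPlus {X : Type*} [Fintype X] [DecidableEq X]
    (β T : ℝ) (A B Q : Matrix X X ℂ) : Matrix X X ℂ :=
  fermiMinus β T A B Q * mexp ((-β : ℂ) • Q) *
    mexp ((Complex.I * (T : ℂ)) • (A + Complex.I • B)) *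
    mexp ((-Complex.I * (T : ℂ)) • (A - Complex.I • B))

/-- The general Keldysh covariance `C_{ρσ}(t,t')`. Here `true` encodes the branch `+`
and `false` encodes the branch `−`. -/
noncomputable def keldyshCovGen {X : Type*} [Fintype X] [DecidableEq X]
    (β T : ℝ) (A B Q : Matrix X X ℂ) : Bool → Bool → ℝ → ℝ → Matrix X X ℂ :=
  fun ρ σ t t' =>
  match ρ, σ with
  | false, true =>
      mexp ((Complex.I * ((T - t : ℝ) : ℂ)) • (A + Complex.I • B)) *
        mexp ((-Complex.I * (T : ℂ)) • (A - Complex.I • B)) * fermiMinus β T A B Q *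
        mexp ((Complex.I * (t' : ℂ)) • (A - Complex.I • B))
  | true, false =>
      -(mexp ((-Complex.I * (t : ℂ)) • (A - Complex.I • B)) * fermiMinus β T A B Q *
          mexp ((-β : ℂ) • Q) * mexp ((Complex.I * (t' : ℂ)) • (A + Complex.I • B)))
  | true, true =>
      (if t' ≤ t then (1 : ℂ) else 0) •
          (mexp ((-Complex.I * (t : ℂ)) • (A - Complex.I • B)) * fermiMinus β T A B Q *
            mexp ((Complex.I * (t' : ℂ)) • (A - Complex.I • B)))
        - (if t < t' then (1 : ℂ) else 0) •
          (mexp ((-Complex.I * (t : ℂ)) • (A - Complex.I • B)) * fermiPlus β T A B Q *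
            mexp ((Complex.I * (t' : ℂ)) • (A - Complex.I • B)))
  | false, false =>
      (if t ≤ t' then (1 : ℂ) else 0) •
          (mexp ((Complex.I * ((T - t : ℝ) : ℂ)) • (A + Complex.I • B)) *
            mexp ((-Complex.I * (T : ℂ)) • (A - Complex.I • B)) * fermiMinus β T A B Q *
            mexp ((Complex.I * (T : ℂ)) • (A - Complex.I • B)) *
            mexp ((Complex.I * ((T - t' : ℝ) : ℂ)) • (A + Complex.I • B)))
        + (if t' < t then (1 : ℂ) else 0) •
          (mexp ((Complex.I * ((T - t : ℝ) : ℂ)) • (A + Complex.I • B)) *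
            mexp ((-Complex.I * (T : ℂ)) • (A - Complex.I • B)) * fermiMinus β T A B Q *
            mexp ((-β : ℂ) • Q) * mexp ((Complex.I * (t' : ℂ)) • (A + Complex.I • B)))

/-!
Every exponent occurring in the identities is a linear combination `a • A + b • B + c • Q`,
e.g. `(i r) • A₊ = (i r) • A - r • B`. When `A`, `B`, `Q` pairwise commute, so do all such
combinations, hence a product of their exponentials is the exponential of the sum of
coefficients, and each of them commutes with `f = (1 + exp (-β Q - 2 T B))⁻¹` (the matrix
inverse `⁻¹` commutes with whatever commutes with the matrix, also in the singular case,
where it is `0`). Both sides of every identity thereby reduce to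
`f * exp (a • A + b • B + c • Q)`, and it remains to compare coefficients.
-/

namespace Matrix

variable {n α : Type*} [Fintype n] [DecidableEq n] [CommRing α]

theorem commute_nonsing_inv_right {A B : Matrix n n α} (h : Commute A B) :
    Commute A B⁻¹ := by
  by_cases hB : IsUnit B.det
  · let := B.invertibleOfIsUnitDet hB
    rw [← invOf_eq_nonsing_inv]
    exact h.invOf_right
  · rw [nonsing_inv_apply_not_isUnit B hB]
    exact Commute.zero_right A

end Matrix

section CommutingTriple

variable {X : Type*}

def comb (A B Q : Matrix X X ℂ) (a b c : ℂ) : Matrix X X ℂ :=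
  a • A + b • B + c • Q

variable (A B Q : Matrix X X ℂ)

theorem comb_add (a b c a' b' c' : ℂ) :
    comb A B Q a b c + comb A B Q a' b' c' = comb A B Q (a + a') (b + b') (c + c') := by
  simp only [comb]
  module

theorem smul_left_eq_comb (z : ℂ) : z • A = comb A B Q z 0 0 := by
  simp only [comb]
  module

theorem smul_middle_eq_comb (z : ℂ) : z • B = comb A B Q 0 z 0 := by
  simp only [comb]
  module

theorem smul_right_eq_comb (z : ℂ) : z • Q = comb A B Q 0 0 z := by
  simp only [comb]
  module

theorem I_mul_smul_add_I_smul_eq_comb (r : ℂ) :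
    (Complex.I * r) • (A + Complex.I • B) = comb A B Q (Complex.I * r) (-r) 0 := by
  simp only [comb, smul_add, smul_smul, mul_right_comm _ r, Complex.I_mul_I]
  module

theorem I_mul_smul_sub_I_smul_eq_comb (r : ℂ) :
    (Complex.I * r) • (A - Complex.I • B) = comb A B Q (Complex.I * r) r 0 := by
  simp only [comb, smul_sub, smul_smul, mul_right_comm _ r, Complex.I_mul_I]
  module

theorem neg_I_mul_smul_sub_I_smul_eq_comb (r : ℂ) :
    (-Complex.I * r) • (A - Complex.I • B) = comb A B Q (-Complex.I * r) (-r) 0 := by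
  simp only [comb, smul_sub, smul_smul, mul_right_comm _ r, neg_mul, Complex.I_mul_I]
  module

variable {A B Q} [Fintype X] [DecidableEq X]

theorem commute_comb (hAB : Commute A B) (hAQ : Commute A Q) (hBQ : Commute B Q)
    (a b c a' b' c' : ℂ) : Commute (comb A B Q a b c) (comb A B Q a' b' c') := by
  have hA : Commute A (comb A B Q a' b' c') :=
    (((Commute.refl A).smul_right _).add_right (hAB.smul_right _)).add_right (hAQ.smul_right _)
  have hB : Commute B (comb A B Q a' b' c') :=
    ((hAB.symm.smul_right _).add_right ((Commute.refl B).smul_right _)).add_right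
      (hBQ.smul_right _)
  have hQ : Commute Q (comb A B Q a' b' c') :=
    ((hAQ.symm.smul_right _).add_right (hBQ.symm.smul_right _)).add_right
      ((Commute.refl Q).smul_right _)
  exact ((hA.smul_left a).add_left (hB.smul_left b)).add_left (hQ.smul_left c)

theorem mexp_comb_mul_mexp_comb (hAB : Commute A B) (hAQ : Commute A Q)
    (hBQ : Commute B Q) (a b c a' b' c' : ℂ) :
    mexp (comb A B Q a b c) * mexp (comb A B Q a' b' c')
      = mexp (comb A B Q (a + a') (b + b') (c + c')) := by
  rw [mexp, mexp, mexp, ← Matrix.exp_add_of_commute _ _ (commute_comb hAB hAQ hBQ ..),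
    comb_add]

theorem commute_mexp_comb_inv_one_add_mexp_comb (hAB : Commute A B) (hAQ : Commute A Q)
    (hBQ : Commute B Q) (a b c a' b' c' : ℂ) :
    Commute (mexp (comb A B Q a b c)) (1 + mexp (comb A B Q a' b' c'))⁻¹ :=
  Matrix.commute_nonsing_inv_right
    ((Commute.one_right _).add_right (commute_comb hAB hAQ hBQ ..).exp)

theorem mexp_comb_mul_inv_one_add_mexp_comb_mul (hAB : Commute A B) (hAQ : Commute A Q)
    (hBQ : Commute B Q) (a b c a' b' c' : ℂ) (Z : Matrix X X ℂ) :
    mexp (comb A B Q a b c) * ((1 + mexp (comb A B Q a' b' c'))⁻¹ * Z)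
      = (1 + mexp (comb A B Q a' b' c'))⁻¹ * (mexp (comb A B Q a b c) * Z) := by
  rw [← mul_assoc, (commute_mexp_comb_inv_one_add_mexp_comb hAB hAQ hBQ ..).eq, mul_assoc]

end CommutingTriple

theorem keldysh_covariance_commuting_case_identities_general
    {X : Type*} [Fintype X] [DecidableEq X]
    (β T : ℝ)
    (A B Q : Matrix X X ℂ)
    (hAB : Commute A B) (hAQ : Commute A Q) (hBQ : Commute B Q) :
    (mexp ((Complex.I * (T : ℂ)) • (A + Complex.I • B)) *
        mexp ((-Complex.I * (T : ℂ)) • (A - Complex.I • B))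
      = mexp (((-(2 * T) : ℝ) : ℂ) • B) ∧
     fermiMinus β T A B Q = (1 + mexp ((-β : ℂ) • Q + ((-(2 * T) : ℝ) : ℂ) • B))⁻¹) ∧
    (∀ t ∈ Set.Icc (0 : ℝ) T, ∀ t' ∈ Set.Icc (0 : ℝ) T,
      mexp ((Complex.I * ((T - t : ℝ) : ℂ)) • (A + Complex.I • B)) *
          mexp ((-Complex.I * (T : ℂ)) • (A - Complex.I • B)) * fermiMinus β T A B Q *
          mexp ((Complex.I * (t' : ℂ)) • (A - Complex.I • B))
        = mexp ((-Complex.I * (t : ℂ)) • A) *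
            (1 + mexp ((-β : ℂ) • Q + ((-(2 * T) : ℝ) : ℂ) • B))⁻¹ *
            mexp ((Complex.I * (t' : ℂ)) • A) *
            mexp (((-(2 * T) + t + t' : ℝ) : ℂ) • B)) ∧
    (∀ t ∈ Set.Icc (0 : ℝ) T, ∀ t' ∈ Set.Icc (0 : ℝ) T,
      mexp ((-Complex.I * (t : ℂ)) • (A - Complex.I • B)) * fermiMinus β T A B Q *
          mexp ((-β : ℂ) • Q) * mexp ((Complex.I * (t' : ℂ)) • (A + Complex.I • B))
        = mexp ((-Complex.I * (t : ℂ)) • A) *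
            (1 + mexp ((-β : ℂ) • Q + ((-(2 * T) : ℝ) : ℂ) • B))⁻¹ *
            mexp ((-β : ℂ) • Q) * mexp ((Complex.I * (t' : ℂ)) • A) *
            mexp (((-(t + t') : ℝ) : ℂ) • B)) ∧
    (∀ t ∈ Set.Icc (0 : ℝ) T, ∀ t' ∈ Set.Icc (0 : ℝ) T,
      (mexp ((-Complex.I * (t : ℂ)) • (A - Complex.I • B)) * fermiMinus β T A B Q *
          mexp ((Complex.I * (t' : ℂ)) • (A - Complex.I • B))
        = mexp ((-Complex.I * (t : ℂ)) • A) *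
            (1 + mexp ((-β : ℂ) • Q + ((-(2 * T) : ℝ) : ℂ) • B))⁻¹ *
            mexp ((Complex.I * (t' : ℂ)) • A) *
            mexp (((t' - t : ℝ) : ℂ) • B)) ∧
      (mexp ((-Complex.I * (t : ℂ)) • (A - Complex.I • B)) * fermiPlus β T A B Q *
          mexp ((Complex.I * (t' : ℂ)) • (A - Complex.I • B))
        = mexp ((-Complex.I * (t : ℂ)) • A) *
            (1 + mexp ((-β : ℂ) • Q + ((-(2 * T) : ℝ) : ℂ) • B))⁻¹ *
            mexp ((-β : ℂ) • Q) * mexp ((Complex.I * (t' : ℂ)) • A) *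
            mexp (((t' - t - 2 * T : ℝ) : ℂ) • B))) := by
  refine ⟨⟨?_, ?_⟩, fun t _ t' _ => ?_, fun t _ t' _ => ?_, fun t _ t' _ => ⟨?_, ?_⟩⟩ <;>
    simp only [fermiPlus, fermiMinus, I_mul_smul_add_I_smul_eq_comb A B Q,
      I_mul_smul_sub_I_smul_eq_comb A B Q, neg_I_mul_smul_sub_I_smul_eq_comb A B Q] <;>
    simp only [smul_left_eq_comb A B Q, smul_middle_eq_comb A B Q,
      smul_right_eq_comb A B Q, comb_add, mul_assoc,
      mexp_comb_mul_mexp_comb hAB hAQ hBQ,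
      mexp_comb_mul_inv_one_add_mexp_comb_mul hAB hAQ hBQ] <;>
    push_cast <;> ring_nf

/-- In the commuting case, the blocks of the general Keldysh covariance reduce to the
explicit formulas with the effective Fermi operator `f = (I + e^{−βQ − 2TB})⁻¹`:
(i) `e^{iA₊T} e^{−iA₋T} = e^{−2TB}` and `f₋ᵦ = f`; (ii)–(iv) the corresponding identities
for the products appearing in `C_{−+}`, `C_{+−}` and `C_{++}`. -/
theorem keldysh_covariance_commuting_case_identities
    {X : Type*} [Fintype X] [DecidableEq X] [Nonempty X]
    (β T : ℝ) (hβ : 0 < β) (hT : 0 < T)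
    (A B Q : Matrix X X ℂ) (hA : A.IsHermitian) (hB' : B.IsHermitian) (hQ : Q.IsHermitian)
    (hB : B.PosSemidef) (hAB : Commute A B) (hAQ : Commute A Q) (hBQ : Commute B Q) :
    (mexp ((Complex.I * (T : ℂ)) • (A + Complex.I • B)) *
        mexp ((-Complex.I * (T : ℂ)) • (A - Complex.I • B))
      = mexp (((-(2 * T) : ℝ) : ℂ) • B) ∧
     fermiMinus β T A B Q = (1 + mexp ((-β : ℂ) • Q + ((-(2 * T) : ℝ) : ℂ) • B))⁻¹) ∧
    (∀ t ∈ Set.Icc (0 : ℝ) T, ∀ t' ∈ Set.Icc (0 : ℝ) T,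
      mexp ((Complex.I * ((T - t : ℝ) : ℂ)) • (A + Complex.I • B)) *
          mexp ((-Complex.I * (T : ℂ)) • (A - Complex.I • B)) * fermiMinus β T A B Q *
          mexp ((Complex.I * (t' : ℂ)) • (A - Complex.I • B))
        = mexp ((-Complex.I * (t : ℂ)) • A) *
            (1 + mexp ((-β : ℂ) • Q + ((-(2 * T) : ℝ) : ℂ) • B))⁻¹ *
            mexp ((Complex.I * (t' : ℂ)) • A) *
            mexp (((-(2 * T) + t + t' : ℝ) : ℂ) • B)) ∧
    (∀ t ∈ Set.Icc (0 : ℝ) T, ∀ t' ∈ Set.Icc (0 : ℝ) T,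
      mexp ((-Complex.I * (t : ℂ)) • (A - Complex.I • B)) * fermiMinus β T A B Q *
          mexp ((-β : ℂ) • Q) * mexp ((Complex.I * (t' : ℂ)) • (A + Complex.I • B))
        = mexp ((-Complex.I * (t : ℂ)) • A) *
            (1 + mexp ((-β : ℂ) • Q + ((-(2 * T) : ℝ) : ℂ) • B))⁻¹ *
            mexp ((-β : ℂ) • Q) * mexp ((Complex.I * (t' : ℂ)) • A) *
            mexp (((-(t + t') : ℝ) : ℂ) • B)) ∧
    (∀ t ∈ Set.Icc (0 : ℝ) T, ∀ t' ∈ Set.Icc (0 : ℝ) T,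
      (mexp ((-Complex.I * (t : ℂ)) • (A - Complex.I • B)) * fermiMinus β T A B Q *
          mexp ((Complex.I * (t' : ℂ)) • (A - Complex.I • B))
        = mexp ((-Complex.I * (t : ℂ)) • A) *
            (1 + mexp ((-β : ℂ) • Q + ((-(2 * T) : ℝ) : ℂ) • B))⁻¹ *
            mexp ((Complex.I * (t' : ℂ)) • A) *
            mexp (((t' - t : ℝ) : ℂ) • B)) ∧
      (mexp ((-Complex.I * (t : ℂ)) • (A - Complex.I • B)) * fermiPlus β T A B Q *
          mexp ((Complex.I * (t' : ℂ)) • (A - Complex.I • B))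
        = mexp ((-Complex.I * (t : ℂ)) • A) *
            (1 + mexp ((-β : ℂ) • Q + ((-(2 * T) : ℝ) : ℂ) • B))⁻¹ *
            mexp ((-β : ℂ) • Q) * mexp ((Complex.I * (t' : ℂ)) • A) *
            mexp (((t' - t - 2 * T : ℝ) : ℂ) • B))) :=
  keldysh_covariance_commuting_case_identities_general β T A B Q hAB hAQ hBQ
end
end

section
/- Let β > 0 and q > 0, and set f_β(E) = (1 + e^{βE})^{−1} for E ∈ ℝ. Define φ: ℝ → ℂ by φ(s) = π^{−1/2} √(q f_β(−q)) / (is − q). Then ∫_ℝ |φ(s)|² ds = f_β(−q) (in particular this is ≤ 1), and ∫_ℝ conj(φ(s)) e^{iβs} φ(s) ds = f_β(q). -/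
/-!
Since `‖φ s‖² = (q f_β(-q) / π) · (s² + q²)⁻¹` and `conj (φ s) · e^{iβs} · φ s = e^{iβs} ‖φ s‖²`,
both identities reduce to integrals of the Lorentzian `(s² + q²)⁻¹`: its total mass `π / q` is
the normalisation of the Cauchy density, and its Fourier transform `∫ e^{iβs} (s² + q²)⁻¹ ds =
(π / q) e^{-q|β|}` follows by Fourier inversion from the elementary transform of the Laplace
density `e^{-2πq|x|}`. The second identity is then `f_β(-q) e^{-βq} = f_β(q)`.
-/

open MeasureTheory
open Real Set FourierTransform
open scoped Complex

theorem integral_univ_inv_sq_add_sq {q : ℝ} (hq : 0 < q) :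
    ∫ s : ℝ, (s ^ 2 + q ^ 2)⁻¹ = π / q := by
  have h := ProbabilityTheory.integral_cauchyPDFReal_eq_one 0 (γ := q.toNNReal) (by simpa using hq)
  simp only [ProbabilityTheory.cauchyPDFReal_def, Real.coe_toNNReal q hq.le, sub_zero,
    integral_const_mul] at h
  field_simp at h ⊢
  linarith

theorem integrable_inv_sq_add_sq {q : ℝ} (hq : 0 < q) :
    Integrable fun s : ℝ => (s ^ 2 + q ^ 2)⁻¹ :=
  .of_integral_ne_zero <| by rw [integral_univ_inv_sq_add_sq hq]; positivity

theorem integrable_exp_neg_mul_abs {q : ℝ} (hq : 0 < q) :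
    Integrable fun x : ℝ => rexp (-(q * |x|)) := by
  rw [← integrableOn_univ, ← Iic_union_Ioi (a := 0)]
  refine .union ((integrableOn_exp_mul_Iic hq 0).congr_fun (fun x hx => ?_) measurableSet_Iic)
    ((integrableOn_exp_mul_Ioi (neg_neg_of_pos hq) 0).congr_fun (fun x hx => ?_) measurableSet_Ioi)
  · rw [abs_of_nonpos hx]; ring_nf
  · rw [abs_of_pos hx]; ring_nf

theorem fourier_exp_neg_two_pi_mul_abs {q : ℝ} (hq : 0 < q) (ξ : ℝ) :
    𝓕 (fun x : ℝ => (rexp (-(2 * π * q * |x|)) : ℂ)) ξ = (q / (π * (ξ ^ 2 + q ^ 2)) : ℝ) := by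
  set a : ℂ := 2 * π * (q + ξ * Complex.I)
  set b : ℂ := 2 * π * (q - ξ * Complex.I)
  have ha : 0 < a.re := by simp [a]; positivity
  have hb : 0 < b.re := by simp [b]; positivity
  have hIic : ∀ x ∈ Iic (0 : ℝ),
      cexp (↑(-2 * π * x * ξ) * Complex.I) • (rexp (-(2 * π * q * |x|)) : ℂ) = cexp (b * x) := by
    intro x hx
    rw [abs_of_nonpos hx, smul_eq_mul, Complex.ofReal_exp, ← Complex.exp_add]
    congr 1; push_cast; ring
  have hIoi : ∀ x ∈ Ioi (0 : ℝ),
      cexp (↑(-2 * π * x * ξ) * Complex.I) • (rexp (-(2 * π * q * |x|)) : ℂ) = cexp (-a * x) := by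
    intro x hx
    rw [abs_of_pos hx, smul_eq_mul, Complex.ofReal_exp, ← Complex.exp_add]
    congr 1; push_cast; ring
  have ha' : (-a).re < 0 := by simpa using ha
  rw [Real.fourier_real_eq_integral_exp_smul, ← intervalIntegral.integral_Iic_add_Ioi (b := 0),
    setIntegral_congr_fun measurableSet_Iic hIic, setIntegral_congr_fun measurableSet_Ioi hIoi,
    integral_exp_mul_complex_Iic hb, integral_exp_mul_complex_Ioi ha']
  · have hb0 : b ≠ 0 := fun h => by simp [h] at hb
    have ha0 : a ≠ 0 := fun h => by simp [h] at ha
    have hq' : (q : ℂ) ^ 2 + ξ ^ 2 ≠ 0 := by exact_mod_cast (by positivity : q ^ 2 + ξ ^ 2 ≠ 0)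
    have hπ : (π : ℂ) ≠ 0 := by exact_mod_cast pi_ne_zero
    simp only [Complex.ofReal_zero, mul_zero, Complex.exp_zero, div_neg, neg_div, neg_neg]
    rw [div_add_div _ _ hb0 ha0]
    simp only [a, b]
    push_cast
    field_simp
    ring_nf
    simp only [Complex.I_sq]
    ring
  · exact (integrableOn_exp_mul_complex_Iic hb 0).congr_fun (fun x hx => (hIic x hx).symm)
      measurableSet_Iic
  · exact (integrableOn_exp_mul_complex_Ioi ha' 0).congr_fun (fun x hx => (hIoi x hx).symm)
      measurableSet_Ioi

theorem integral_cexp_mul_inv_sq_add_sq {q : ℝ} (hq : 0 < q) (β : ℝ) :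
    ∫ s : ℝ, cexp (Complex.I * β * s) * ((s ^ 2 + q ^ 2)⁻¹ : ℝ)
      = (π / q * rexp (-(q * |β|)) : ℝ) := by
  set g : ℝ → ℂ := fun x => (rexp (-(2 * π * q * |x|)) : ℂ)
  have hg : Integrable g := (integrable_exp_neg_mul_abs (by positivity)).ofReal
  have hFg : 𝓕 g = fun ξ => ((q / π : ℝ) : ℂ) * ((ξ ^ 2 + q ^ 2)⁻¹ : ℝ) := by
    ext ξ
    rw [fourier_exp_neg_two_pi_mul_abs hq, ← Complex.ofReal_mul]
    congr 1; field_simp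
  have hFg_int : Integrable (𝓕 g) := by
    rw [hFg]; exact (integrable_inv_sq_add_sq hq).ofReal.const_mul _
  have inversion := hg.fourierInv_fourier_eq hFg_int (v := β / (2 * π)) (by fun_prop)
  have hintegrand : ∀ v : ℝ,
      cexp (↑(2 * π * inner ℝ v (β / (2 * π))) * Complex.I) •
          (((q / π : ℝ) : ℂ) * ((v ^ 2 + q ^ 2)⁻¹ : ℝ))
        = ((q / π : ℝ) : ℂ) * (cexp (Complex.I * β * v) * ((v ^ 2 + q ^ 2)⁻¹ : ℝ)) := by
    intro v
    rw [smul_eq_mul, mul_left_comm]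
    congr 3
    simp only [RCLike.inner_apply, conj_trivial]
    push_cast
    field_simp
  have hgβ : g (β / (2 * π)) = (rexp (-(q * |β|)) : ℝ) := by
    simp only [g, abs_div, abs_of_pos two_pi_pos]
    congr 2
    field_simp
  simp only [fourierInv_eq', hFg, hintegrand, integral_const_mul, hgβ] at inversion
  rw [Complex.ofReal_mul, ← inversion, ← mul_assoc, ← Complex.ofReal_mul,
    div_mul_div_cancel₀ hq.ne', div_self pi_ne_zero, Complex.ofReal_one, one_mul]

theorem norm_ofReal_div_I_mul_sub_sq (c s q : ℝ) :
    ‖(c : ℂ) / (Complex.I * s - q)‖ ^ 2 = c ^ 2 * (s ^ 2 + q ^ 2)⁻¹ := by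
  rw [norm_div, div_pow, Complex.norm_real, Real.norm_eq_abs, sq_abs, Complex.sq_norm,
    div_eq_mul_inv]
  congr 2
  simp [Complex.normSq_apply]
  ring

theorem conj_mul_mul_self (w z : ℂ) : (starRingEnd ℂ) w * z * w = z * (‖w‖ ^ 2 : ℝ) := by
  rw [mul_right_comm, Complex.conj_mul', mul_comm]; push_cast; rfl

/-- The `L²(ℝ)` identities for the functions used in the Gram representation of the Keldysh
covariance: for `φ(s) = π^{−1/2} √(q f_β(−q)) / (is − q)` with `β, q > 0` and
`f_β(E) = (1 + e^{βE})⁻¹`, one has `∫ |φ(s)|² ds = f_β(−q) ≤ 1` and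
`∫ conj(φ(s)) e^{iβs} φ(s) ds = f_β(q)`. -/
theorem gram_function_integral_identities (β q : ℝ) (hβ : 0 < β) (hq : 0 < q) :
    ∀ φ : ℝ → ℂ,
      (∀ s : ℝ,
        φ s = (((Real.sqrt Real.pi)⁻¹ *
            Real.sqrt (q * (1 + Real.exp (β * (-q)))⁻¹) : ℝ) : ℂ) /
          (Complex.I * (s : ℂ) - (q : ℂ))) →
      (∫ s : ℝ, ‖φ s‖ ^ 2) = (1 + Real.exp (β * (-q)))⁻¹ ∧
      (1 + Real.exp (β * (-q)))⁻¹ ≤ 1 ∧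
      (∫ s : ℝ, (starRingEnd ℂ) (φ s) * Complex.exp (Complex.I * (β : ℂ) * (s : ℂ)) * φ s)
        = (((1 + Real.exp (β * q))⁻¹ : ℝ) : ℂ) := by
  intro φ hφ
  set f := (1 + rexp (β * -q))⁻¹
  have hnorm : ∀ s : ℝ, ‖φ s‖ ^ 2 = q * f / π * (s ^ 2 + q ^ 2)⁻¹ := by
    intro s
    rw [hφ, norm_ofReal_div_I_mul_sub_sq, mul_pow, inv_pow, sq_sqrt pi_pos.le,
      sq_sqrt (by positivity)]
    ring
  have hfermi : f * rexp (-(q * β)) = (1 + rexp (β * q))⁻¹ := by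
    simp only [f, mul_neg, mul_comm q β, exp_neg]
    field_simp
    ring
  refine ⟨?_, inv_le_one_of_one_le₀ (by linarith [exp_pos (β * -q)]), ?_⟩
  · simp_rw [hnorm]
    rw [integral_const_mul, integral_univ_inv_sq_add_sq hq]
    field_simp
  · simp_rw [conj_mul_mul_self, hnorm, Complex.ofReal_mul (q * f / π),
      mul_left_comm (cexp _) ((q * f / π : ℝ) : ℂ)]
    rw [integral_const_mul, integral_cexp_mul_inv_sq_add_sq hq, abs_of_pos hβ,
      ← Complex.ofReal_mul, ← hfermi]
    congr 1
    field_simp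
end
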